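/- arXiv:1802.07539 — 4 statements merged into one kernel-verified Lean document; each statement's English description precedes it below -/
import Mathlib

section
/- Let (Q(ℓ))_{ℓ≥0} be a stochastic process with Q ∈ W^{1,1}(0, L_max) almost surely, and let L be a nonnegative random variable independent of the process with P(L ≥ ℓ) > 0 for all ℓ ∈ [0, L_max]. Then the continuous level Monte Carlo estimator (1/N) Σ_{k=1}^N ∫_0^{L_max} (1/P(L ≥ ℓ)) (dQ/dℓ)^{(k)}(ℓ) 1_{[0, L^{(k)}]}(ℓ) dℓ, built from N i.i.d. samples, has expectation equal to E[Q(L_max) − Q(0)]. -/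
open MeasureTheory ProbabilityTheory Set Function

/-! Fubini moves the expectation inside the level integral. At a fixed level `ℓ`, independence of
the process and `L` gives `E[1{ℓ ≤ L} dQ(ℓ)] = P(L ≥ ℓ) E[dQ(ℓ)]`, so the weight `1 / P(L ≥ ℓ)`
cancels exactly and the level integrand has expectation `E[dQ(ℓ)]`; integrating over `ℓ` and using
`Q(L_max) - Q(0) = ∫ dQ` gives the claim. The same computation for `|dQ|` shows that the weighted
integrand is integrable on `Ω × (0, L_max]`. Each sample has the law of `(dQ, L)` at every fixed
level, hence jointly with `ℓ` on the product space, so all `N` terms of the estimator have the same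
expectation. -/

namespace MeasureTheory

variable {Ω : Type*} [MeasurableSpace Ω] {μ : Measure Ω}

theorem integral_inv_mul_sum_eq_of_forall {n : ℕ} (hn : 0 < n) {f : Fin n → Ω → ℝ} {c : ℝ}
    (hf : ∀ k, Integrable (f k) μ) (hc : ∀ k, ∫ ω, f k ω ∂μ = c) :
    ∫ ω, (n : ℝ)⁻¹ * ∑ k, f k ω ∂μ = c := by
  rw [integral_const_mul, integral_finsetSum _ fun k _ => hf k,
    Finset.sum_congr rfl fun k _ => hc k, Finset.sum_const, Finset.card_univ, Fintype.card_fin,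
    nsmul_eq_mul, inv_mul_cancel_left₀ (Nat.cast_ne_zero.2 hn.ne')]

theorem measurable_measureReal_setOf_le [IsFiniteMeasure μ] (Y : Ω → ℝ) :
    Measurable fun ℓ => μ.real {ω | ℓ ≤ Y ω} :=
  Antitone.measurable fun _ _ hab => measureReal_mono fun _ hω => hab.trans hω

end MeasureTheory

namespace ProbabilityTheory

variable {Ω β : Type*} [MeasurableSpace Ω] [MeasurableSpace β] {μ : Measure Ω}

theorem identDistrib_prod_of_forall_identDistrib {Ω' T : Type*} [MeasurableSpace Ω']
    [MeasurableSpace T] [SFinite μ] {μ' : Measure Ω'} [SFinite μ'] {ν : Measure T} [SFinite ν]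
    {F : Ω × T → β} {F' : Ω' × T → β} (hF : Measurable F) (hF' : Measurable F')
    (h : ∀ t, IdentDistrib (fun ω => F (ω, t)) (fun ω => F' (ω, t)) μ μ') :
    IdentDistrib (fun z => (z.2, F z)) (fun z => (z.2, F' z)) (μ.prod ν) (μ'.prod ν) where
  aemeasurable_fst := (measurable_snd.prodMk hF).aemeasurable
  aemeasurable_snd := (measurable_snd.prodMk hF').aemeasurable
  map_eq := by
    ext S hS
    rw [Measure.map_apply (measurable_snd.prodMk hF) hS,
      Measure.map_apply (measurable_snd.prodMk hF') hS,
      Measure.prod_apply_symm ((measurable_snd.prodMk hF) hS),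
      Measure.prod_apply_symm ((measurable_snd.prodMk hF') hS)]
    exact lintegral_congr fun t => (h t).measure_mem_eq (measurable_prodMk_left hS)

theorem IndepFun.setIntegral_preimage_eq_mul {Z : Ω → ℝ} {Y : Ω → β} (h : IndepFun Z Y μ)
    (hZ : AEMeasurable Z μ) (hY : Measurable Y) {s : Set β} (hs : MeasurableSet s) :
    ∫ ω in Y ⁻¹' s, Z ω ∂μ = μ.real (Y ⁻¹' s) * ∫ ω, Z ω ∂μ :=
  Indep.setIntegral_eq_mul (f := id) hY.comap_le h.symm hZ ⟨s, hs, rfl⟩ aestronglyMeasurable_id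

section

variable [IsFiniteMeasure μ]

theorem IndepFun.integral_ite_le_div_measureReal {Z Y : Ω → ℝ} (h : IndepFun Z Y μ)
    (hZ : AEMeasurable Z μ) (hY : Measurable Y) {ℓ : ℝ} (hℓ : μ {ω | ℓ ≤ Y ω} ≠ 0) :
    ∫ ω, (if ℓ ≤ Y ω then Z ω / μ.real {ω' | ℓ ≤ Y ω'} else 0) ∂μ = ∫ ω, Z ω ∂μ := by
  have hpos : μ.real {ω | ℓ ≤ Y ω} ≠ 0 := (measureReal_ne_zero_iff (measure_ne_top _ _)).2 hℓ
  calc ∫ ω, (if ℓ ≤ Y ω then Z ω / μ.real {ω' | ℓ ≤ Y ω'} else 0) ∂μ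
      = (∫ ω in Y ⁻¹' Ici ℓ, Z ω ∂μ) / μ.real {ω | ℓ ≤ Y ω} := by
        rw [← integral_div, ← integral_indicator (measurableSet_Ici.preimage hY)]
        refine integral_congr_ae (ae_of_all _ fun ω => ?_)
        by_cases hω : ℓ ≤ Y ω <;> simp [hω]
    _ = ∫ ω, Z ω ∂μ := by
        rw [h.setIntegral_preimage_eq_mul hZ hY measurableSet_Ici]
        exact mul_div_cancel_left₀ _ hpos

variable {ν : Measure ℝ} [SFinite ν]

theorem integrable_prod_ite_le_div_measureReal {X : Ω → ℝ → ℝ} {Y : Ω → ℝ}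
    (hXY : IndepFun X Y μ) (hY : Measurable Y) (hX : Integrable (uncurry X) (μ.prod ν))
    (hp : ∀ᵐ ℓ ∂ν, μ {ω | ℓ ≤ Y ω} ≠ 0) :
    Integrable (fun z : Ω × ℝ =>
      if z.2 ≤ Y z.1 then X z.1 z.2 / μ.real {ω | z.2 ≤ Y ω} else 0) (μ.prod ν) := by
  have hmeas : AEStronglyMeasurable (fun z : Ω × ℝ =>
      if z.2 ≤ Y z.1 then X z.1 z.2 / μ.real {ω | z.2 ≤ Y ω} else 0) (μ.prod ν) := by
    have hp_meas : Measurable fun z : Ω × ℝ => μ.real {ω | z.2 ≤ Y ω} :=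
      (measurable_measureReal_setOf_le Y).comp measurable_snd
    refine ((hX.aestronglyMeasurable.div₀ hp_meas.aestronglyMeasurable).indicator
      (measurableSet_le measurable_snd (hY.comp measurable_fst))).congr (ae_of_all _ fun z => ?_)
    by_cases hz : z.2 ≤ Y z.1 <;> simp [hz, uncurry]
  refine (integrable_prod_iff' hmeas).2 ⟨?_, hX.integral_norm_prod_right.congr ?_⟩
  · filter_upwards [hX.prod_left_ae] with ℓ hℓ
    refine ((hℓ.div_const (μ.real {ω | ℓ ≤ Y ω})).indicator
      (measurableSet_le (measurable_const (a := ℓ)) hY)).congr (ae_of_all _ fun ω => ?_)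
    by_cases hω : ℓ ≤ Y ω <;> simp [hω, uncurry]
  · filter_upwards [hX.prod_left_ae, hp] with ℓ hℓ hpℓ
    change ∫ ω, ‖X ω ℓ‖ ∂μ = _
    rw [← IndepFun.integral_ite_le_div_measureReal (Z := fun ω => ‖X ω ℓ‖)
      (hXY.comp ((measurable_pi_apply ℓ).norm) measurable_id) hℓ.norm.aemeasurable hY hpℓ]
    refine integral_congr_ae (ae_of_all _ fun ω => ?_)
    by_cases hω : ℓ ≤ Y ω <;> simp [hω, norm_div, abs_of_nonneg measureReal_nonneg]

theorem integral_integral_ite_le_div_measureReal {X : Ω → ℝ → ℝ} {Y : Ω → ℝ}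
    (hXY : IndepFun X Y μ) (hY : Measurable Y) (hX : Integrable (uncurry X) (μ.prod ν))
    (hp : ∀ᵐ ℓ ∂ν, μ {ω | ℓ ≤ Y ω} ≠ 0) :
    ∫ ω, ∫ ℓ, (if ℓ ≤ Y ω then X ω ℓ / μ.real {ω' | ℓ ≤ Y ω'} else 0) ∂ν ∂μ
      = ∫ ω, ∫ ℓ, X ω ℓ ∂ν ∂μ := by
  rw [integral_integral_swap (integrable_prod_ite_le_div_measureReal hXY hY hX hp),
    integral_integral_swap hX]
  refine integral_congr_ae ?_
  filter_upwards [hX.prod_left_ae, hp] with ℓ hℓ hpℓ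
  exact IndepFun.integral_ite_le_div_measureReal (hXY.comp (measurable_pi_apply ℓ) measurable_id)
    hℓ.aemeasurable hY hpℓ

theorem integral_integral_ite_le_div_measureReal_of_identDistrib {X X' : Ω → ℝ → ℝ}
    {Y Y' : Ω → ℝ} (hX : Measurable (uncurry X)) (hY : Measurable Y)
    (hX' : Measurable (uncurry X')) (hY' : Measurable Y')
    (hid : ∀ ℓ, IdentDistrib (fun ω => (X' ω ℓ, Y' ω)) (fun ω => (X ω ℓ, Y ω)) μ μ)
    (hW : Integrable (fun z : Ω × ℝ =>
      if z.2 ≤ Y z.1 then X z.1 z.2 / μ.real {ω | z.2 ≤ Y ω} else 0) (μ.prod ν)) :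
    Integrable (fun ω => ∫ ℓ, (if ℓ ≤ Y' ω then X' ω ℓ / μ.real {ω' | ℓ ≤ Y ω'} else 0) ∂ν) μ ∧
      ∫ ω, ∫ ℓ, (if ℓ ≤ Y' ω then X' ω ℓ / μ.real {ω' | ℓ ≤ Y ω'} else 0) ∂ν ∂μ
        = ∫ ω, ∫ ℓ, (if ℓ ≤ Y ω then X ω ℓ / μ.real {ω' | ℓ ≤ Y ω'} else 0) ∂ν ∂μ := by
  have hG : Measurable fun w : ℝ × ℝ × ℝ =>
      if w.1 ≤ w.2.2 then w.2.1 / μ.real {ω | w.1 ≤ Y ω} else 0 :=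
    Measurable.ite (measurableSet_le measurable_fst measurable_snd.snd)
      (measurable_snd.fst.div ((measurable_measureReal_setOf_le Y).comp measurable_fst))
      measurable_const
  have hidW : IdentDistrib
      (fun z : Ω × ℝ => if z.2 ≤ Y' z.1 then X' z.1 z.2 / μ.real {ω | z.2 ≤ Y ω} else 0)
      (fun z : Ω × ℝ => if z.2 ≤ Y z.1 then X z.1 z.2 / μ.real {ω | z.2 ≤ Y ω} else 0)
      (μ.prod ν) (μ.prod ν) :=
    (identDistrib_prod_of_forall_identDistrib (hX'.prodMk (hY'.comp measurable_fst))
      (hX.prodMk (hY.comp measurable_fst)) hid).comp hG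
  have hW' := hidW.integrable_iff.2 hW
  exact ⟨hW'.integral_prod_left,
    (integral_prod _ hW').symm.trans (hidW.integral_eq.trans (integral_prod _ hW))⟩

end

end ProbabilityTheory

theorem clmc_estimator_unbiased_general {Ω : Type*} [MeasurableSpace Ω] (μ : Measure Ω)
    [IsProbabilityMeasure μ] (N : ℕ) (hN : 0 < N) (Lmax : ℝ)
    (Q dQ : Ω → ℝ → ℝ) (L : Ω → ℝ)
    (hdQm : Measurable fun p : Ω × ℝ => dQ p.1 p.2) (hLm : Measurable L)
    (hpos : ∀ ℓ ∈ Set.Icc (0 : ℝ) Lmax, 0 < μ {ω | ℓ ≤ L ω})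
    (hindep : IndepFun (fun ω => (Q ω, dQ ω)) L μ)
    (hW11 : ∀ᵐ ω ∂μ, IntegrableOn (dQ ω) (Set.Ioc 0 Lmax) ∧
      Q ω Lmax - Q ω 0 = ∫ ℓ in Set.Ioc (0 : ℝ) Lmax, dQ ω ℓ)
    (hint : (∫⁻ ω, (∫⁻ ℓ in Set.Ioc (0 : ℝ) Lmax, ‖dQ ω ℓ‖₊) ∂μ) < ⊤)
    (dQk : Fin N → Ω → ℝ → ℝ) (Lk : Fin N → Ω → ℝ)
    (hkm : ∀ k, Measurable fun p : Ω × ℝ => dQk k p.1 p.2)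
    (hLkm : ∀ k, Measurable (Lk k))
    (hiid : ∀ k, IdentDistrib (fun ω => (dQk k ω, Lk k ω))
      (fun ω => (dQ ω, L ω)) μ μ) :
    ∫ ω, ((N : ℝ)⁻¹ * ∑ k, ∫ ℓ in Set.Ioc (0 : ℝ) Lmax,
        (Set.Icc 0 (Lk k ω)).indicator
          (fun ℓ' => dQk k ω ℓ' / (μ {ω' | ℓ' ≤ L ω'}).toReal) ℓ) ∂μ
      = ∫ ω, (Q ω Lmax - Q ω 0) ∂μ := by
  have hdQ : Integrable (uncurry dQ) (μ.prod (volume.restrict (Ioc 0 Lmax))) :=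
    ⟨hdQm.aestronglyMeasurable, (lintegral_prod _ hdQm.enorm.aemeasurable).trans_lt hint⟩
  have hp : ∀ᵐ ℓ ∂(volume.restrict (Ioc 0 Lmax)), μ {ω | ℓ ≤ L ω} ≠ 0 :=
    (ae_restrict_mem measurableSet_Ioc).mono fun ℓ hℓ => (hpos ℓ (Ioc_subset_Icc_self hℓ)).ne'
  have hdQL : IndepFun dQ L μ := hindep.comp measurable_snd measurable_id
  have hmean : ∫ ω, (∫ ℓ in Ioc 0 Lmax,
      if ℓ ≤ L ω then dQ ω ℓ / μ.real {ω' | ℓ ≤ L ω'} else 0) ∂μ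
        = ∫ ω, (Q ω Lmax - Q ω 0) ∂μ := by
    rw [integral_integral_ite_le_div_measureReal hdQL hLm hdQ hp]
    exact integral_congr_ae (hW11.mono fun ω h => h.2.symm)
  have hsample := fun k => integral_integral_ite_le_div_measureReal_of_identDistrib hdQm hLm
    (hkm k) (hLkm k) (fun ℓ => (hiid k).comp
      (((measurable_pi_apply ℓ).comp measurable_fst).prodMk measurable_snd))
    (integrable_prod_ite_le_div_measureReal hdQL hLm hdQ hp)
  have hterm : ∀ k ω, ∫ ℓ in Ioc 0 Lmax, (Icc 0 (Lk k ω)).indicator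
      (fun ℓ' => dQk k ω ℓ' / (μ {ω' | ℓ' ≤ L ω'}).toReal) ℓ
      = ∫ ℓ in Ioc 0 Lmax, (if ℓ ≤ Lk k ω then dQk k ω ℓ / μ.real {ω' | ℓ ≤ L ω'} else 0) :=
    fun k ω => setIntegral_congr_fun measurableSet_Ioc fun ℓ hℓ => by
      simp [indicator_apply, hℓ.1.le, measureReal_def]
  simp only [hterm]
  exact integral_inv_mul_sum_eq_of_forall hN (fun k => (hsample k).1)
    fun k => (hsample k).2.trans hmean

/-- Unbiasedness of the CLMC estimator (Proposition 2.1): for a stochastic process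
`Q(ℓ)` with `Q ∈ W^{1,1}(0, L_max)` a.s. (encoded by the a.s. fundamental-theorem
representation via the weak derivative `dQ` and finite expected `L¹` norm), a
nonnegative random level `L` independent of the process with `P(L ≥ ℓ) > 0` on
`[0, L_max]`, and `N` i.i.d. samples, the CLMC estimator has expectation
`E[Q(L_max) − Q(0)]`. -/
theorem clmc_estimator_unbiased {Ω : Type*} [MeasurableSpace Ω] (μ : Measure Ω)
    [IsProbabilityMeasure μ] (N : ℕ) (hN : 0 < N) (Lmax : ℝ) (hLmax : 0 < Lmax)
    (Q dQ : Ω → ℝ → ℝ) (L : Ω → ℝ)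
    (hdQm : Measurable fun p : Ω × ℝ => dQ p.1 p.2) (hLm : Measurable L)
    (hL0 : ∀ ω, 0 ≤ L ω)
    (hpos : ∀ ℓ ∈ Set.Icc (0 : ℝ) Lmax, 0 < μ {ω | ℓ ≤ L ω})
    (hindep : IndepFun (fun ω => (Q ω, dQ ω)) L μ)
    (hW11 : ∀ᵐ ω ∂μ, IntegrableOn (dQ ω) (Set.Ioc 0 Lmax) ∧
      Q ω Lmax - Q ω 0 = ∫ ℓ in Set.Ioc (0 : ℝ) Lmax, dQ ω ℓ)
    (hint : (∫⁻ ω, (∫⁻ ℓ in Set.Ioc (0 : ℝ) Lmax, ‖dQ ω ℓ‖₊) ∂μ) < ⊤)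
    (dQk : Fin N → Ω → ℝ → ℝ) (Lk : Fin N → Ω → ℝ)
    (hkm : ∀ k, Measurable fun p : Ω × ℝ => dQk k p.1 p.2)
    (hLkm : ∀ k, Measurable (Lk k))
    (hiid : ∀ k, IdentDistrib (fun ω => (dQk k ω, Lk k ω))
      (fun ω => (dQ ω, L ω)) μ μ) :
    ∫ ω, ((N : ℝ)⁻¹ * ∑ k, ∫ ℓ in Set.Ioc (0 : ℝ) Lmax,
        (Set.Icc 0 (Lk k ω)).indicator
          (fun ℓ' => dQk k ω ℓ' / (μ {ω' | ℓ' ≤ L ω'}).toReal) ℓ) ∂μ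
      = ∫ ω, (Q ω Lmax - Q ω 0) ∂μ :=
  clmc_estimator_unbiased_general μ N hN Lmax Q dQ L hdQm hLm hpos hindep hW11 hint dQk Lk hkm hLkm
    hiid
end

section
/- For a nonnegative random variable L independent of an integrable random function f(ℓ) on [0,∞) with P(L ≥ ℓ) > 0 for all ℓ, we have E[∫_0^{L} f(ℓ)/P(L ≥ ℓ) dℓ] = ∫_0^{∞} E[f(ℓ)] dℓ, provided ∫_0^∞ E[|f(ℓ)|] dℓ < ∞. -/
/-!
Integrate over `ℓ` first (Fubini). For fixed `ℓ`, independence of `f ℓ` and `L` factorizes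
`E[f(ℓ) 1{ℓ ≤ L}] = E[f(ℓ)] P(ℓ ≤ L)`, so the inverse-probability weight cancels exactly. The same
computation applied to `|f|` shows that the weighted integrand has the same absolute integral as
`f` itself, which is what justifies Fubini.
-/

open MeasureTheory ProbabilityTheory Real ENNReal

lemma Set.indicator_preimage_eq_mul_indicator_one {Ω β M : Type*} [MulZeroOneClass M]
    {Y : Ω → β} {s : Set β} (X : Ω → M) (ω : Ω) :
    (Y ⁻¹' s).indicator X ω = X ω * s.indicator 1 (Y ω) := by
  by_cases h : Y ω ∈ s <;> simp [h]

namespace ProbabilityTheory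

section

variable {Ω β : Type*} [MeasurableSpace Ω] [MeasurableSpace β] {μ : Measure Ω}
  {Y : Ω → β} {s : Set β}

lemma IndepFun.lintegral_indicator_preimage {X : Ω → ℝ≥0∞} (hXY : X ⟂ᵢ[μ] Y)
    (hX : Measurable X) (hY : Measurable Y) (hs : MeasurableSet s) :
    ∫⁻ ω, (Y ⁻¹' s).indicator X ω ∂μ = (∫⁻ ω, X ω ∂μ) * μ (Y ⁻¹' s) := by
  have hind : Measurable (s.indicator (1 : β → ℝ≥0∞)) := measurable_one.indicator hs
  have hXI : X ⟂ᵢ[μ] fun ω => s.indicator 1 (Y ω) := hXY.comp measurable_id hind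
  have hIY : Measurable fun ω => s.indicator (1 : β → ℝ≥0∞) (Y ω) := hind.comp hY
  simp_rw [Set.indicator_preimage_eq_mul_indicator_one]
  rw [lintegral_mul_eq_lintegral_mul_lintegral_of_indepFun'' hX.aemeasurable
      hIY.aemeasurable hXI, ← lintegral_indicator_one (hY hs)]
  rfl

lemma IndepFun.integral_indicator_preimage {X : Ω → ℝ} (hXY : X ⟂ᵢ[μ] Y)
    (hX : AEStronglyMeasurable X μ) (hY : Measurable Y) (hs : MeasurableSet s) :
    ∫ ω, (Y ⁻¹' s).indicator X ω ∂μ = (∫ ω, X ω ∂μ) * μ.real (Y ⁻¹' s) := by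
  have hind : Measurable (s.indicator (1 : β → ℝ)) := measurable_one.indicator hs
  have hXI : X ⟂ᵢ[μ] fun ω => s.indicator 1 (Y ω) := hXY.comp measurable_id hind
  simp_rw [Set.indicator_preimage_eq_mul_indicator_one]
  rw [hXI.integral_fun_mul_eq_mul_integral hX (hind.comp hY).aestronglyMeasurable,
    ← integral_indicator_one (hY hs)]
  rfl

variable [IsFiniteMeasure μ]

lemma IndepFun.lintegral_enorm_indicator_preimage_div {X : Ω → ℝ} (hXY : X ⟂ᵢ[μ] Y)
    (hX : Measurable X) (hY : Measurable Y) (hs : MeasurableSet s) (hpos : μ (Y ⁻¹' s) ≠ 0) :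
    ∫⁻ ω, ‖(Y ⁻¹' s).indicator X ω / μ.real (Y ⁻¹' s)‖ₑ ∂μ = ∫⁻ ω, ‖X ω‖ₑ ∂μ := by
  have hp : μ.real (Y ⁻¹' s) ≠ 0 := (measureReal_ne_zero_iff (measure_ne_top μ _)).2 hpos
  have hnorm : ∀ ω, ‖(Y ⁻¹' s).indicator X ω / μ.real (Y ⁻¹' s)‖ₑ
      = (Y ⁻¹' s).indicator (fun ω => ‖X ω‖ₑ) ω * (μ (Y ⁻¹' s))⁻¹ := by
    intro ω
    rw [div_eq_mul_inv, enorm_mul, enorm_indicator_eq_indicator_enorm, enorm_inv hp,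
      Real.enorm_eq_ofReal measureReal_nonneg, ofReal_measureReal]
  have hXe : (fun ω => ‖X ω‖ₑ) ⟂ᵢ[μ] Y := hXY.comp measurable_enorm measurable_id
  simp_rw [hnorm]
  rw [lintegral_mul_const _ ((hX.enorm).indicator (hY hs)),
    hXe.lintegral_indicator_preimage hX.enorm hY hs,
    mul_assoc, ENNReal.mul_inv_cancel hpos (measure_ne_top μ _), mul_one]

lemma IndepFun.integral_indicator_preimage_div {X : Ω → ℝ} (hXY : X ⟂ᵢ[μ] Y)
    (hX : AEStronglyMeasurable X μ) (hY : Measurable Y) (hs : MeasurableSet s)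
    (hpos : μ (Y ⁻¹' s) ≠ 0) :
    ∫ ω, (Y ⁻¹' s).indicator X ω / μ.real (Y ⁻¹' s) ∂μ = ∫ ω, X ω ∂μ := by
  rw [integral_div, hXY.integral_indicator_preimage hX hY hs,
    mul_div_cancel_right₀ _ ((measureReal_ne_zero_iff (measure_ne_top μ _)).2 hpos)]

end

section

variable {Ω : Type*} [MeasurableSpace Ω] {μ : Measure Ω} [IsFiniteMeasure μ]
  {f : ℝ → Ω → ℝ} {L : Ω → ℝ}

lemma measurable_indicator_le_div_measureReal (hf : Measurable (Function.uncurry f))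
    (hL : Measurable L) :
    Measurable (Function.uncurry fun ω ℓ =>
      {ω | ℓ ≤ L ω}.indicator (f ℓ) ω / μ.real {ω | ℓ ≤ L ω}) := by
  have hsurv : Measurable fun ℓ => μ.real {ω | ℓ ≤ L ω} :=
    Antitone.measurable fun a b hab => measureReal_mono fun ω (h : b ≤ L ω) => hab.trans h
  have hset : MeasurableSet {p : Ω × ℝ | p.2 ≤ L p.1} :=
    measurableSet_le measurable_snd (hL.comp measurable_fst)
  have hfp : Measurable fun p : Ω × ℝ => f p.2 p.1 := hf.comp measurable_swap
  exact (hfp.indicator hset).div (hsurv.comp measurable_snd)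

lemma integrable_indicator_le_div_measureReal {ν : Measure ℝ} [SFinite ν]
    (hf : Measurable (Function.uncurry f)) (hL : Measurable L)
    (hindep : (fun ω ℓ => f ℓ ω) ⟂ᵢ[μ] L) (hpos : ∀ᵐ ℓ ∂ν, μ {ω | ℓ ≤ L ω} ≠ 0)
    (hint : ∫⁻ ℓ, ∫⁻ ω, ‖f ℓ ω‖ₑ ∂μ ∂ν < ∞) :
    Integrable (Function.uncurry fun ω ℓ =>
      {ω | ℓ ≤ L ω}.indicator (f ℓ) ω / μ.real {ω | ℓ ≤ L ω}) (μ.prod ν) := by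
  have hmeas := measurable_indicator_le_div_measureReal (μ := μ) hf hL
  refine ⟨hmeas.aestronglyMeasurable, ?_⟩
  rw [hasFiniteIntegral_iff_enorm, lintegral_prod_symm _ hmeas.enorm.aemeasurable]
  refine lt_of_eq_of_lt (lintegral_congr_ae ?_) hint
  filter_upwards [hpos] with ℓ hℓ
  exact (hindep.comp (measurable_pi_apply ℓ) measurable_id).lintegral_enorm_indicator_preimage_div
    (hf.comp measurable_prodMk_left) hL measurableSet_Ici hℓ

theorem integral_integral_indicator_le_div_measureReal {ν : Measure ℝ} [SFinite ν]
    (hf : Measurable (Function.uncurry f)) (hL : Measurable L)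
    (hindep : (fun ω ℓ => f ℓ ω) ⟂ᵢ[μ] L) (hpos : ∀ᵐ ℓ ∂ν, μ {ω | ℓ ≤ L ω} ≠ 0)
    (hint : ∫⁻ ℓ, ∫⁻ ω, ‖f ℓ ω‖ₑ ∂μ ∂ν < ∞) :
    ∫ ω, ∫ ℓ, {ω | ℓ ≤ L ω}.indicator (f ℓ) ω / μ.real {ω | ℓ ≤ L ω} ∂ν ∂μ
      = ∫ ℓ, ∫ ω, f ℓ ω ∂μ ∂ν := by
  rw [integral_integral_swap (integrable_indicator_le_div_measureReal hf hL hindep hpos hint)]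
  refine integral_congr_ae ?_
  filter_upwards [hpos] with ℓ hℓ
  exact (hindep.comp (measurable_pi_apply ℓ) measurable_id).integral_indicator_preimage_div
    (hf.comp measurable_prodMk_left).aestronglyMeasurable hL measurableSet_Ici hℓ

end

end ProbabilityTheory

theorem clmc_exchange_identity_general {Ω : Type*} [MeasurableSpace Ω] (μ : Measure Ω)
    [IsProbabilityMeasure μ] (f : ℝ → Ω → ℝ)
    (hjm : Measurable (Function.uncurry f))
    (L : Ω → ℝ) (hLm : Measurable L)
    (hpos : ∀ ℓ : ℝ, 0 ≤ ℓ → 0 < μ {ω | ℓ ≤ L ω})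
    (hindep : IndepFun (fun ω => fun ℓ => f ℓ ω) L μ)
    (hint : (∫⁻ ℓ in Set.Ioi (0 : ℝ), ∫⁻ ω, ‖f ℓ ω‖₊ ∂μ) < ⊤) :
    ∫ ω, (∫ ℓ in Set.Ioi (0 : ℝ),
        (Set.Icc 0 (L ω)).indicator
          (fun ℓ' => f ℓ' ω / (μ {ω' | ℓ' ≤ L ω'}).toReal) ℓ) ∂μ
      = ∫ ℓ in Set.Ioi (0 : ℝ), ∫ ω, f ℓ ω ∂μ := by
  have hpos' : ∀ᵐ ℓ ∂volume.restrict (Set.Ioi 0), μ {ω | ℓ ≤ L ω} ≠ 0 :=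
    (ae_restrict_mem measurableSet_Ioi).mono fun ℓ hℓ => (hpos ℓ (le_of_lt hℓ)).ne'
  have hrestrict : ∀ ω, ∀ ℓ ∈ Set.Ioi (0 : ℝ),
      (Set.Icc 0 (L ω)).indicator (fun ℓ' => f ℓ' ω / (μ {ω' | ℓ' ≤ L ω'}).toReal) ℓ
        = {ω | ℓ ≤ L ω}.indicator (f ℓ) ω / μ.real {ω | ℓ ≤ L ω} := by
    intro ω ℓ (hℓ : 0 < ℓ)
    by_cases h : ℓ ≤ L ω <;> simp [h, hℓ.le, measureReal_def]
  simp_rw [setIntegral_congr_fun measurableSet_Ioi (hrestrict _)]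
  exact integral_integral_indicator_le_div_measureReal hjm hLm hindep hpos' hint

/-- Key exchange-of-expectation identity underlying the unbiasedness of CLMC:
for a nonnegative random variable `L` independent of the process `f` with
`P(L ≥ ℓ) > 0` for all `ℓ ≥ 0` and `∫_0^∞ E[|f(ℓ)|] dℓ < ∞`, we have
`E[∫_0^L f(ℓ)/P(L ≥ ℓ) dℓ] = ∫_0^∞ E[f(ℓ)] dℓ`. -/
theorem clmc_exchange_identity {Ω : Type*} [MeasurableSpace Ω] (μ : Measure Ω)
    [IsProbabilityMeasure μ] (f : ℝ → Ω → ℝ)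
    (hjm : Measurable (Function.uncurry f))
    (L : Ω → ℝ) (hLm : Measurable L) (hL0 : ∀ ω, 0 ≤ L ω)
    (hpos : ∀ ℓ : ℝ, 0 ≤ ℓ → 0 < μ {ω | ℓ ≤ L ω})
    (hindep : IndepFun (fun ω => fun ℓ => f ℓ ω) L μ)
    (hint : (∫⁻ ℓ in Set.Ioi (0 : ℝ), ∫⁻ ω, ‖f ℓ ω‖₊ ∂μ) < ⊤) :
    ∫ ω, (∫ ℓ in Set.Ioi (0 : ℝ),
        (Set.Icc 0 (L ω)).indicator
          (fun ℓ' => f ℓ' ω / (μ {ω' | ℓ' ≤ L ω'}).toReal) ℓ) ∂μ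
      = ∫ ℓ in Set.Ioi (0 : ℝ), ∫ ω, f ℓ ω ∂μ :=
  clmc_exchange_identity_general μ f hjm L hLm hpos hindep hint
end

section
/- Suppose |E[dQ(ℓ)/dℓ]| ≤ c₁ e^{−αℓ} for all ℓ > 0, with α > 0, and L ~ Exponential(r) with rate r > 0, independent of Q. Then the bias of the CLMC estimator truncated at level L_max satisfies |E[∫_{L∧L_max}^{L} e^{rℓ} E[dQ(ℓ)/dℓ] dℓ]| ≤ (c₁/α) e^{−α L_max}. -/
/-!
Swapping the expectation over `L` with the integral over `ℓ` (Fubini), the integrand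
`e^{rℓ} E[dQ(ℓ)/dℓ]` on `ℓ > L_max` gets weighted by `P(L ≥ ℓ) = e^{-rℓ}`, which exactly cancels
the importance weight `e^{rℓ}`. The bias is therefore `∫_{L_max}^∞ E[dQ(ℓ)/dℓ] dℓ`, and the
exponential decay bound integrates to `(c₁/α) e^{-α L_max}`.
-/

open MeasureTheory ProbabilityTheory Real Set

instance nullSingletonClass_expMeasure (r : ℝ) : NullSingletonClass (expMeasure r) := by
  unfold expMeasure gammaMeasure
  infer_instance

lemma expMeasure_real_Ici {r : ℝ} (hr : 0 < r) {x : ℝ} (hx : 0 ≤ x) :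
    (expMeasure r).real (Ici x) = exp (-(r * x)) := by
  have := isProbabilityMeasure_expMeasure hr
  rw [← measureReal_congr Ioi_ae_eq_Ici, ← compl_Iic, probReal_compl_eq_one_sub measurableSet_Iic,
    ← cdf_eq_real, cdf_expMeasure_eq hr, if_pos hx, sub_sub_cancel]

lemma integral_exp_neg_mul_Ioi {α : ℝ} (hα : 0 < α) (a : ℝ) :
    ∫ x in Ioi a, exp (-(α * x)) = exp (-(α * a)) / α := by
  simp_rw [← neg_mul]
  rw [integral_exp_mul_Ioi (neg_lt_zero.2 hα), div_neg, neg_div, neg_neg]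

lemma integrableOn_exp_neg_mul_Ioi {α : ℝ} (hα : 0 < α) (a : ℝ) :
    IntegrableOn (fun x ↦ exp (-(α * x))) (Ioi a) := by
  simpa only [neg_mul] using exp_neg_integrableOn_Ioi a hα

lemma integrableOn_Ioi_of_abs_le_exp {f : ℝ → ℝ} {a c α : ℝ} (hα : 0 < α)
    (hfm : AEStronglyMeasurable f (volume.restrict (Ioi a)))
    (hf : ∀ x ∈ Ioi a, |f x| ≤ c * exp (-(α * x))) : IntegrableOn f (Ioi a) :=
  ((integrableOn_exp_neg_mul_Ioi hα a).const_mul c).mono' hfm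
    ((ae_restrict_iff' measurableSet_Ioi).2 (ae_of_all _ hf))

lemma abs_setIntegral_Ioi_le_of_abs_le_exp {f : ℝ → ℝ} {a c α : ℝ} (hα : 0 < α)
    (hf : ∀ x ∈ Ioi a, |f x| ≤ c * exp (-(α * x))) :
    |∫ x in Ioi a, f x| ≤ c / α * exp (-(α * a)) := by
  calc |∫ x in Ioi a, f x|
      ≤ ∫ x in Ioi a, c * exp (-(α * x)) :=
        norm_integral_le_of_norm_le (f := f) ((integrableOn_exp_neg_mul_Ioi hα a).const_mul c)
          ((ae_restrict_iff' measurableSet_Ioi).2 (ae_of_all _ hf))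
    _ = c / α * exp (-(α * a)) := by
        rw [integral_const_mul, integral_exp_neg_mul_Ioi hα]
        ring

lemma intervalIntegral_min_eq_setIntegral_Iic_indicator (f : ℝ → ℝ) (a b : ℝ) :
    ∫ x in min b a..b, f x = ∫ x in Iic b, (Ioi a).indicator f x := by
  have hset : Ioc (min b a) b = Iic b ∩ Ioi a := by
    rw [inter_comm, Ioi_inter_Iic]
    rcases le_total b a with hba | hab
    · rw [min_eq_left hba, Ioc_self, Ioc_eq_empty hba.not_gt]
    · rw [min_eq_right hab]
  rw [intervalIntegral.integral_of_le (min_le_left b a), setIntegral_indicator measurableSet_Ioi,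
    hset]

theorem integral_setIntegral_Iic_eq_integral_measureReal_mul {Ω : Type*} [MeasurableSpace Ω]
    {μ : Measure Ω} [IsFiniteMeasure μ] {L : Ω → ℝ} (hL : Measurable L) {G : ℝ → ℝ}
    (hG : Measurable G) (hint : Integrable fun ℓ ↦ μ.real {ω | ℓ ≤ L ω} * G ℓ) :
    ∫ ω, (∫ ℓ in Iic (L ω), G ℓ) ∂μ = ∫ ℓ, μ.real {ω | ℓ ≤ L ω} * G ℓ := by
  set F : Ω → ℝ → ℝ := fun ω ℓ ↦ (Iic (L ω)).indicator G ℓ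
  have hsection : ∀ ℓ, (fun ω ↦ F ω ℓ) = {ω | ℓ ≤ L ω}.indicator fun _ ↦ G ℓ := fun _ ↦ rfl
  have hsection_norm : ∀ ℓ, (fun ω ↦ ‖F ω ℓ‖) = {ω | ℓ ≤ L ω}.indicator fun _ ↦ ‖G ℓ‖ :=
    fun _ ↦ funext fun _ ↦ norm_indicator_eq_indicator_norm _ _
  have hmeas : ∀ ℓ, MeasurableSet {ω | ℓ ≤ L ω} := fun ℓ ↦ hL measurableSet_Ici
  have hF : Integrable (Function.uncurry F) (μ.prod volume) := by
    have hFm : Measurable (Function.uncurry F) :=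
      (hG.comp measurable_snd).indicator (measurableSet_le measurable_snd (hL.comp measurable_fst))
    refine (integrable_prod_iff' hFm.aestronglyMeasurable).2 ⟨ae_of_all _ fun ℓ ↦ ?_, ?_⟩
    · simp only [Function.uncurry_apply_pair, hsection]
      exact (integrable_const _).indicator (hmeas ℓ)
    · refine hint.norm.congr (ae_of_all _ fun ℓ ↦ ?_)
      simp only [Function.uncurry_apply_pair, hsection_norm, integral_indicator_const _ (hmeas _),
        smul_eq_mul, norm_mul, Real.norm_of_nonneg measureReal_nonneg]
  calc ∫ ω, (∫ ℓ in Iic (L ω), G ℓ) ∂μ = ∫ ω, (∫ ℓ, F ω ℓ) ∂μ := by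
        simp only [F, integral_indicator measurableSet_Iic]
    _ = ∫ ℓ, ∫ ω, F ω ℓ ∂μ := integral_integral_swap hF
    _ = ∫ ℓ, μ.real {ω | ℓ ≤ L ω} * G ℓ := by
        simp only [hsection, integral_indicator_const _ (hmeas _), smul_eq_mul]

theorem clmc_bias_bound_general {Ω : Type*} [MeasurableSpace Ω] (μ : Measure Ω)
    [IsProbabilityMeasure μ] (dQ : ℝ → Ω → ℝ)
    (hjm : Measurable (Function.uncurry dQ)) (L : Ω → ℝ) (hLm : Measurable L)
    (r α c₁ Lmax : ℝ) (hr : 0 < r) (hα : 0 < α) (hLmax : 0 ≤ Lmax)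
    (hlaw : Measure.map L μ = expMeasure r)
    (hbias : ∀ ℓ > (0 : ℝ), |∫ ω, dQ ℓ ω ∂μ| ≤ c₁ * Real.exp (-(α * ℓ))) :
    |∫ ω, (∫ ℓ in (min (L ω) Lmax)..(L ω), Real.exp (r * ℓ) * ∫ ω', dQ ℓ ω' ∂μ) ∂μ|
      ≤ (c₁ / α) * Real.exp (-(α * Lmax)) := by
  set h : ℝ → ℝ := fun ℓ ↦ ∫ ω, dQ ℓ ω ∂μ
  set G : ℝ → ℝ := (Ioi Lmax).indicator fun ℓ ↦ exp (r * ℓ) * h ℓ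
  have hh : Measurable h := hjm.stronglyMeasurable.integral_prod_right'.measurable
  have hbound : ∀ ℓ ∈ Ioi Lmax, |h ℓ| ≤ c₁ * exp (-(α * ℓ)) :=
    fun ℓ hℓ ↦ hbias ℓ (hLmax.trans_lt hℓ)
  have hweight : ∀ ℓ, μ.real {ω | ℓ ≤ L ω} * G ℓ = (Ioi Lmax).indicator h ℓ := by
    intro ℓ
    by_cases hℓ : ℓ ∈ Ioi Lmax
    · have htail : μ.real {ω | ℓ ≤ L ω} = exp (-(r * ℓ)) := by
        rw [← expMeasure_real_Ici hr (hLmax.trans hℓ.le), ← hlaw,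
          map_measureReal_apply hLm measurableSet_Ici]
        rfl
      simp only [G, indicator_of_mem hℓ, htail, ← mul_assoc, ← exp_add, neg_add_cancel, exp_zero,
        one_mul]
    · simp only [G, indicator_of_notMem hℓ, mul_zero]
  have hint : Integrable ((Ioi Lmax).indicator h) :=
    (integrable_indicator_iff measurableSet_Ioi).2 <|
      integrableOn_Ioi_of_abs_le_exp hα hh.aestronglyMeasurable.restrict hbound
  calc |∫ ω, (∫ ℓ in (min (L ω) Lmax)..(L ω), exp (r * ℓ) * h ℓ) ∂μ|
      = |∫ ℓ, μ.real {ω | ℓ ≤ L ω} * G ℓ| := by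
        simp_rw [intervalIntegral_min_eq_setIntegral_Iic_indicator]
        rw [integral_setIntegral_Iic_eq_integral_measureReal_mul hLm
          ((by fun_prop : Measurable fun ℓ ↦ exp (r * ℓ) * h ℓ).indicator measurableSet_Ioi)
          ((integrable_congr (ae_of_all _ hweight)).2 hint)]
    _ = |∫ ℓ in Ioi Lmax, h ℓ| := by simp_rw [hweight, integral_indicator measurableSet_Ioi]
    _ ≤ c₁ / α * exp (-(α * Lmax)) := abs_setIntegral_Ioi_le_of_abs_le_exp hα hbound

/-- Bias bound for the truncated CLMC estimator: if `|E[dQ(ℓ)/dℓ]| ≤ c₁ e^{−αℓ}` and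
`L ~ Exponential(r)` (so `1/P(L ≥ ℓ) = e^{rℓ}`), then
`|E[∫_{L∧L_max}^{L} e^{rℓ} E[dQ(ℓ)/dℓ] dℓ]| ≤ (c₁/α) e^{−α L_max}`. -/
theorem clmc_bias_bound {Ω : Type*} [MeasurableSpace Ω] (μ : Measure Ω)
    [IsProbabilityMeasure μ] (dQ : ℝ → Ω → ℝ)
    (hjm : Measurable (Function.uncurry dQ)) (L : Ω → ℝ) (hLm : Measurable L)
    (r α c₁ Lmax : ℝ) (hr : 0 < r) (hα : 0 < α) (hc₁ : 0 < c₁) (hLmax : 0 ≤ Lmax)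
    (hlaw : Measure.map L μ = expMeasure r)
    (hbias : ∀ ℓ > (0 : ℝ), |∫ ω, dQ ℓ ω ∂μ| ≤ c₁ * Real.exp (-(α * ℓ))) :
    |∫ ω, (∫ ℓ in (min (L ω) Lmax)..(L ω), Real.exp (r * ℓ) * ∫ ω', dQ ℓ ω' ∂μ) ∂μ|
      ≤ (c₁ / α) * Real.exp (-(α * Lmax)) :=
  clmc_bias_bound_general μ dQ hjm L hLm r α c₁ Lmax hr hα hLmax hlaw hbias
end

section
/- Suppose V[dQ(ℓ)/dℓ] ≥ c₂'² e^{−ηℓ} and the cost satisfies C(ℓ) ≥ c₃' e^{ηℓ} for some η > 0 and constants c₂', c₃' > 0, and let L ~ Exponential(r). If r ≥ η then E[(∫_0^{L} e^{rℓ} V[dQ(ℓ)/dℓ]^{1/2} dℓ)²] = +∞, and if r ≤ η then E[∫_0^{L} C(ℓ) dℓ] = +∞. Consequently for every r > 0, at least one of the variance of the untruncated (L_max = ∞) CLMC estimator or its expected cost is infinite, so their product is infinite. -/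
/-!
Against the density `r e^{-rt}` of `Exponential(r)`, any quantity growing at least like
`e^{st}` with `s ≥ r` has infinite expectation. Since `V[dQ(ℓ)/dℓ]^{1/2} ≥ c₂' e^{-ηℓ/2}`,
the squared primitive of `e^{rℓ} V^{1/2}` grows like `e^{(2r-η)t}`, and the accumulated
cost grows like `e^{ηt}`; at least one of the rates `2r - η`, `η` is `≥ r`.
-/

open MeasureTheory ProbabilityTheory Real ENNReal Filter

lemma lintegral_comp_eq_top_of_map_eq_expMeasure {Ω : Type*} [MeasurableSpace Ω]
    {μ : Measure Ω} {L : Ω → ℝ} {r : ℝ} (hL : Measurable L) (hlaw : μ.map L = expMeasure r)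
    (hr : 0 < r) (g : ℝ → ℝ≥0∞) (hg : Measurable g) {s c : ℝ} (hs : r ≤ s) (hc : 0 < c)
    (hgrowth : ∀ᶠ t in atTop, ENNReal.ofReal (c * exp (s * t)) ≤ g t) :
    ∫⁻ ω, g (L ω) ∂μ = ⊤ := by
  obtain ⟨M, hM⟩ := eventually_atTop.1 hgrowth
  have hpdf : Measurable (exponentialPDF r) := (measurable_exponentialPDFReal r).ennreal_ofReal
  have hlb : ∀ t ∈ Set.Ici (max M 0), ENNReal.ofReal (r * c) ≤ exponentialPDF r t * g t := by
    intro t ht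
    have ht0 : 0 ≤ t := (le_max_right M 0).trans ht
    rw [exponentialPDF_of_nonneg ht0]
    have hprod : r * exp (-(r * t)) * (c * exp (s * t)) = r * c * exp ((s - r) * t) := by
      rw [mul_mul_mul_comm, ← Real.exp_add]; ring_nf
    calc ENNReal.ofReal (r * c)
        ≤ ENNReal.ofReal (r * exp (-(r * t)) * (c * exp (s * t))) := by
          rw [hprod]
          exact ofReal_le_ofReal (le_mul_of_one_le_right (by positivity)
            (one_le_exp (mul_nonneg (by linarith) ht0)))
      _ ≤ ENNReal.ofReal (r * exp (-(r * t))) * g t := by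
          rw [ofReal_mul (by positivity)]
          exact mul_le_mul_right (hM t ((le_max_left M 0).trans ht)) _
  refine top_unique ?_
  calc ⊤ = ∫⁻ _ in Set.Ici (max M 0), ENNReal.ofReal (r * c) := by
        rw [setLIntegral_const, Real.volume_Ici, mul_top (by simpa using mul_pos hr hc)]
    _ ≤ ∫⁻ t in Set.Ici (max M 0), exponentialPDF r t * g t :=
        setLIntegral_mono (hpdf.mul hg) hlb
    _ ≤ ∫⁻ t, exponentialPDF r t * g t := setLIntegral_le_lintegral _ _
    _ = ∫⁻ ω, g (L ω) ∂μ := by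
        rw [← lintegral_map hg hL, hlaw,
          show expMeasure r = volume.withDensity (exponentialPDF r) from rfl,
          lintegral_withDensity_eq_lintegral_mul _ hpdf hg]
        rfl

lemma integral_const_mul_exp_mul {a : ℝ} (ha : a ≠ 0) (c t : ℝ) :
    ∫ ℓ in (0 : ℝ)..t, c * exp (a * ℓ) = c * ((exp (a * t) - 1) / a) := by
  rw [intervalIntegral.integral_const_mul,
    intervalIntegral.integral_comp_mul_left (fun x => exp x) ha, integral_exp, mul_zero,
    exp_zero, smul_eq_mul, inv_mul_eq_div]

lemma eventually_mul_exp_le_integral_const_mul_exp {a c : ℝ} (ha : 0 < a) (hc : 0 ≤ c) :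
    ∀ᶠ t in atTop, c / (2 * a) * exp (a * t) ≤ ∫ ℓ in (0 : ℝ)..t, c * exp (a * ℓ) := by
  have hexp : Tendsto (fun t => exp (a * t)) atTop atTop :=
    tendsto_exp_atTop.comp (tendsto_id.const_mul_atTop ha)
  filter_upwards [hexp.eventually_ge_atTop 2] with t ht
  rw [integral_const_mul_exp_mul ha.ne', div_mul_eq_mul_div, mul_div_assoc',
    div_le_div_iff₀ (by positivity) ha]
  nlinarith [mul_nonneg (mul_nonneg ha.le hc) (sub_nonneg.2 ht)]

lemma eventually_mul_exp_le_integral {f : ℝ → ℝ} {a c : ℝ} (ha : 0 < a) (hc : 0 ≤ c)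
    (hf : ∀ t, IntervalIntegrable f volume 0 t) (hle : ∀ ℓ ≥ (0 : ℝ), c * exp (a * ℓ) ≤ f ℓ) :
    ∀ᶠ t in atTop, c / (2 * a) * exp (a * t) ≤ ∫ ℓ in (0 : ℝ)..t, f ℓ := by
  filter_upwards [eventually_mul_exp_le_integral_const_mul_exp ha hc, eventually_ge_atTop 0]
    with t ht ht0
  exact ht.trans <| intervalIntegral.integral_mono_on ht0
    (Continuous.intervalIntegrable (by fun_prop) 0 t) (hf t)
    fun ℓ hℓ => hle ℓ hℓ.1

lemma eventually_ofReal_mul_exp_le_setLIntegral_Ioc {f : ℝ → ℝ} {a c : ℝ} (ha : 0 < a)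
    (hc : 0 ≤ c) (hle : ∀ ℓ ≥ (0 : ℝ), c * exp (a * ℓ) ≤ f ℓ) :
    ∀ᶠ t in atTop, ENNReal.ofReal (c / (2 * a) * exp (a * t))
      ≤ ∫⁻ ℓ in Set.Ioc 0 t, ENNReal.ofReal (f ℓ) := by
  filter_upwards [eventually_mul_exp_le_integral_const_mul_exp ha hc, eventually_ge_atTop 0]
    with t ht ht0
  calc ENNReal.ofReal (c / (2 * a) * exp (a * t))
      ≤ ENNReal.ofReal (∫ ℓ in Set.Ioc 0 t, c * exp (a * ℓ)) := by
        rw [← intervalIntegral.integral_of_le ht0]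
        exact ofReal_le_ofReal ht
    _ = ∫⁻ ℓ in Set.Ioc 0 t, ENNReal.ofReal (c * exp (a * ℓ)) :=
        ofReal_integral_eq_lintegral_ofReal
          (by fun_prop : Continuous fun ℓ => c * exp (a * ℓ)).integrableOn_Ioc
          (ae_of_all _ fun ℓ => by positivity)
    _ ≤ ∫⁻ ℓ in Set.Ioc 0 t, ENNReal.ofReal (f ℓ) :=
        setLIntegral_mono' measurableSet_Ioc fun ℓ hℓ => ofReal_le_ofReal (hle ℓ hℓ.1.le)

lemma mul_exp_le_exp_mul_sqrt {c η r v ℓ : ℝ} (hc : 0 ≤ c) (hv : c ^ 2 * exp (-(η * ℓ)) ≤ v) :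
    c * exp ((r - η / 2) * ℓ) ≤ exp (r * ℓ) * √v := by
  have hsqrt : c * exp (-(η * ℓ) / 2) ≤ √v := by
    simpa [Real.sqrt_mul (sq_nonneg c), Real.sqrt_sq hc, ← Real.exp_half] using
      Real.sqrt_le_sqrt hv
  calc c * exp ((r - η / 2) * ℓ) = exp (r * ℓ) * (c * exp (-(η * ℓ) / 2)) := by
        rw [mul_left_comm, ← Real.exp_add]; ring_nf
    _ ≤ exp (r * ℓ) * √v := by gcongr

theorem clmc_unbiased_infinite_general {Ω : Type*} [MeasurableSpace Ω] (μ : Measure Ω)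
    (dQ : ℝ → Ω → ℝ)
    (L : Ω → ℝ) (hLm : Measurable L)
    (r η c₂' c₃' : ℝ) (hr : 0 < r) (hc₂ : 0 < c₂') (hc₃ : 0 < c₃')
    (hlaw : Measure.map L μ = expMeasure r)
    (C : ℝ → ℝ)
    (hvarlb : ∀ ℓ ≥ (0 : ℝ), c₂' ^ 2 * Real.exp (-(η * ℓ)) ≤ variance (dQ ℓ) μ)
    (hClb : ∀ ℓ ≥ (0 : ℝ), c₃' * Real.exp (η * ℓ) ≤ C ℓ)
    (hInt : ∀ a b : ℝ, IntervalIntegrable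
      (fun ℓ => Real.exp (r * ℓ) * Real.sqrt (variance (dQ ℓ) μ)) volume a b) :
    (η ≤ r → ∫⁻ ω, ENNReal.ofReal ((∫ ℓ in (0 : ℝ)..(L ω),
        Real.exp (r * ℓ) * Real.sqrt (variance (dQ ℓ) μ)) ^ 2) ∂μ = ⊤)
    ∧ (r ≤ η → ∫⁻ ω, (∫⁻ ℓ in Set.Ioc 0 (L ω), ENNReal.ofReal (C ℓ)) ∂μ = ⊤)
    ∧ ((∫⁻ ω, ENNReal.ofReal ((∫ ℓ in (0 : ℝ)..(L ω),
          Real.exp (r * ℓ) * Real.sqrt (variance (dQ ℓ) μ)) ^ 2) ∂μ = ⊤)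
        ∨ (∫⁻ ω, (∫⁻ ℓ in Set.Ioc 0 (L ω), ENNReal.ofReal (C ℓ)) ∂μ = ⊤)) := by
  have hsecond : η ≤ r → ∫⁻ ω, ENNReal.ofReal ((∫ ℓ in (0 : ℝ)..(L ω),
      exp (r * ℓ) * √(variance (dQ ℓ) μ)) ^ 2) ∂μ = ⊤ := by
    intro hηr
    have ha : 0 < r - η / 2 := by linarith
    have hgrowth := eventually_mul_exp_le_integral ha hc₂.le (fun t => hInt 0 t)
      fun ℓ hℓ => mul_exp_le_exp_mul_sqrt hc₂.le (hvarlb ℓ hℓ)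
    refine lintegral_comp_eq_top_of_map_eq_expMeasure hLm hlaw hr _
      ((intervalIntegral.continuous_primitive hInt 0).pow 2).measurable.ennreal_ofReal
      (by linarith : r ≤ 2 * (r - η / 2)) (c := (c₂' / (2 * (r - η / 2))) ^ 2)
      (by positivity) ?_
    filter_upwards [hgrowth] with t ht
    refine ofReal_le_ofReal (Eq.trans_le ?_ (pow_le_pow_left₀ (by positivity) ht 2))
    rw [mul_pow, sq (exp _), ← Real.exp_add]
    ring_nf
  have hcost : r ≤ η → ∫⁻ ω, (∫⁻ ℓ in Set.Ioc 0 (L ω), ENNReal.ofReal (C ℓ)) ∂μ = ⊤ :=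
    fun hrη => lintegral_comp_eq_top_of_map_eq_expMeasure hLm hlaw hr _
      (Monotone.measurable fun _ _ h => lintegral_mono_set (Set.Ioc_subset_Ioc_right h))
      hrη (div_pos hc₃ (by linarith))
      (eventually_ofReal_mul_exp_le_setLIntegral_Ioc (hr.trans_le hrη) hc₃.le hClb)
  exact ⟨hsecond, hcost, (le_total η r).imp hsecond hcost⟩

/-- Corollary 2.4(b): if `V[dQ(ℓ)/dℓ] ≥ c₂'² e^{−ηℓ}` and `C(ℓ) ≥ c₃' e^{ηℓ}`, and
`L ~ Exponential(r)`, then for `r ≥ η` the second moment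
`E[(∫_0^L e^{rℓ} V[dQ(ℓ)/dℓ]^{1/2} dℓ)²]` is infinite, for `r ≤ η` the expected cost
`E[∫_0^L C(ℓ) dℓ]` is infinite, and consequently for every `r > 0` at least one of the
two is infinite. -/
theorem clmc_unbiased_infinite {Ω : Type*} [MeasurableSpace Ω] (μ : Measure Ω)
    [IsProbabilityMeasure μ] (dQ : ℝ → Ω → ℝ)
    (hjm : Measurable (Function.uncurry dQ)) (h2 : ∀ ℓ, MemLp (dQ ℓ) 2 μ)
    (L : Ω → ℝ) (hLm : Measurable L)
    (r η c₂' c₃' : ℝ) (hr : 0 < r) (hη : 0 < η) (hc₂ : 0 < c₂') (hc₃ : 0 < c₃')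
    (hlaw : Measure.map L μ = expMeasure r)
    (C : ℝ → ℝ) (hCm : Measurable C) (hC0 : ∀ ℓ, 0 ≤ C ℓ)
    (hvarlb : ∀ ℓ ≥ (0 : ℝ), c₂' ^ 2 * Real.exp (-(η * ℓ)) ≤ variance (dQ ℓ) μ)
    (hClb : ∀ ℓ ≥ (0 : ℝ), c₃' * Real.exp (η * ℓ) ≤ C ℓ)
    (hInt : ∀ a b : ℝ, IntervalIntegrable
      (fun ℓ => Real.exp (r * ℓ) * Real.sqrt (variance (dQ ℓ) μ)) volume a b) :
    (η ≤ r → ∫⁻ ω, ENNReal.ofReal ((∫ ℓ in (0 : ℝ)..(L ω),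
        Real.exp (r * ℓ) * Real.sqrt (variance (dQ ℓ) μ)) ^ 2) ∂μ = ⊤)
    ∧ (r ≤ η → ∫⁻ ω, (∫⁻ ℓ in Set.Ioc 0 (L ω), ENNReal.ofReal (C ℓ)) ∂μ = ⊤)
    ∧ ((∫⁻ ω, ENNReal.ofReal ((∫ ℓ in (0 : ℝ)..(L ω),
          Real.exp (r * ℓ) * Real.sqrt (variance (dQ ℓ) μ)) ^ 2) ∂μ = ⊤)
        ∨ (∫⁻ ω, (∫⁻ ℓ in Set.Ioc 0 (L ω), ENNReal.ofReal (C ℓ)) ∂μ = ⊤)) :=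
  clmc_unbiased_infinite_general μ dQ L hLm r η c₂' c₃' hr hc₂ hc₃ hlaw C hvarlb hClb hInt
end
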